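/- arXiv:1110.2449 — 3 statements merged into one kernel-verified Lean document; each statement's English description precedes it below -/
import Mathlib

section
/- Let A be a bounded linear operator on 𝓗 that preserves the form ω, i.e. ω(Au,Av) = ω(u,v) for all u,v ∈ 𝓗. Then the following are equivalent: (1) A is bijective (invertible); (2) A ∘ J ∘ A^T = J; (3) A^T preserves the form ω; (4) for all m, n ∈ ℤ∖{0}, Σ_{k≠0} sgn(mk)·A_{m,k}·A_{−n,−k} = δ_{m,n}. If in addition C∘A∘C = A, these are also equivalent to: (5) for all m, n ∈ ℤ∖{0}, Σ_{k≠0} sgn(mk)·A_{m,k}·conj(A_{n,k}) = δ_{m,n}. -/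
abbrev NZ : Type := {n : ℤ // n ≠ 0}
noncomputable abbrev Hsp : Type := lp (fun _ : NZ => ℂ) 2
def negNZ (n : NZ) : NZ := ⟨-n.1, neg_ne_zero.mpr n.2⟩
noncomputable def omegaB (u v : Hsp) : ℂ :=
  -∑' k : NZ, (k.1.sign : ℂ) * (u : ∀ _ : NZ, ℂ) k * (v : ∀ _ : NZ, ℂ) (negNZ k)
noncomputable def ent (A : Hsp →L[ℂ] Hsp) (m n : NZ) : ℂ :=
  (A (lp.single 2 n (1:ℂ)) : ∀ _ : NZ, ℂ) m

/-!
Write `ω(u, v) = ⟪K u, v⟫` with the antilinear map `K u = sgn · conj (u ∘ neg)`, so that `K² = -1`,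
and let `C₀ u = conj (u ∘ neg)`; then `Aᵀ = C₀ A* C₀` and `J C₀ = i K`. Preservation of `ω` says
`A* K A = K`, so `-K A* K` is a left inverse of `A`, and `A` is bijective iff `A K A* = K`.
Conditions (2)–(4) are rewritings of this identity: (2) after composing with `C₀`, (3) because
`ω(C₀ x, C₀ y) = -conj ω(x, y)` reduces it to `A*` preserving `ω`, and (4) entrywise. Finally
`C A C = A` gives `A_{-m,-n} = conj A_{m,n}`, which turns (4) into (5).
-/

open scoped ENNReal InnerProductSpace
open Complex ComplexConjugate ContinuousLinearMap

theorem Memℓp.comp_equiv {α β E : Type*} [NormedAddCommGroup E] {p : ℝ≥0∞} {f : α → E}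
    (hf : Memℓp f p) (e : β ≃ α) : Memℓp (f ∘ e) p := by
  rcases p.trichotomy with rfl | rfl | hp
  · exact memℓp_zero (hf.finite_dsupport.preimage e.injective.injOn)
  · exact memℓp_infty (hf.bddAbove.mono (Set.range_comp_subset_range e fun i => ‖f i‖))
  · exact memℓp_gen ((e.summable_iff (f := fun i => ‖f i‖ ^ p.toReal)).2 (hf.summable hp))

noncomputable def lp.compEquivₗᵢ {α β E : Type*} [NormedAddCommGroup E] {p : ℝ≥0∞} [Fact (1 ≤ p)]
    (𝕜 : Type*) [NormedField 𝕜] [NormedSpace 𝕜 E] (e : β ≃ α) :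
    lp (fun _ : α => E) p ≃ₗᵢ[𝕜] lp (fun _ : β => E) p where
  toFun f := ⟨f ∘ e, (lp.memℓp f).comp_equiv e⟩
  invFun g := ⟨g ∘ e.symm, (lp.memℓp g).comp_equiv e.symm⟩
  map_add' _ _ := rfl
  map_smul' _ _ := rfl
  left_inv f := lp.ext (funext fun i => by simp)
  right_inv g := lp.ext (funext fun i => by simp)
  norm_map' f := by
    rcases p.trichotomy with rfl | rfl | hp
    · exact absurd (Fact.out : (1 : ℝ≥0∞) ≤ 0) (by norm_num)
    · exact e.iSup_comp (g := fun i => ‖f i‖)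
    · rw [lp.norm_eq_tsum_rpow hp, lp.norm_eq_tsum_rpow hp]
      exact congrArg (· ^ (1 / p.toReal)) (e.tsum_eq (fun i => ‖f i‖ ^ p.toReal))

theorem map_neg_of_apply_apply_eq_neg {M : Type*} [Neg M] {K : M → M}
    (hK : ∀ x, K (K x) = -x) (x : M) : K (-x) = -K x := by
  rw [← hK x, hK (K x)]

/-- `-K ∘ B ∘ K` is a left inverse of `A`. -/
theorem bijective_iff_of_apply_apply_eq {M F : Type*} [AddGroup M] [FunLike F M M]
    [AddMonoidHomClass F M M] {A : F} {B K : M → M} (hK : ∀ x, K (K x) = -x)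
    (hBA : ∀ u, B (K (A u)) = K u) : Function.Bijective A ↔ ∀ u, A (K (B u)) = K u := by
  have hK_neg := map_neg_of_apply_apply_eq_neg hK
  have hK_inj : Function.Injective K := fun x y h => neg_injective (by rw [← hK x, ← hK y, h])
  constructor
  · intro hA u
    obtain ⟨y, hy⟩ := hA.2 (-K u)
    have hu : K (A y) = u := by rw [hy, hK_neg, hK, neg_neg]
    rw [← hu, hBA, hK, hK, map_neg]
  · intro h
    refine ⟨fun x y hxy => hK_inj (by rw [← hBA x, ← hBA y, hxy]), fun v => ⟨-K (B (K v)), ?_⟩⟩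
    rw [map_neg, h, hK, neg_neg]

theorem forall_inner_map_map_iff_adjoint {𝕜 E F : Type*} [RCLike 𝕜]
    [NormedAddCommGroup E] [InnerProductSpace 𝕜 E] [CompleteSpace E]
    [NormedAddCommGroup F] [InnerProductSpace 𝕜 F] [CompleteSpace F]
    (KE : E → E) (KF : F → F) (T : E →L[𝕜] F) :
    (∀ u v, ⟪KF (T u), T v⟫_𝕜 = ⟪KE u, v⟫_𝕜) ↔ ∀ u, adjoint T (KF (T u)) = KE u := by
  refine forall_congr' fun u => ?_
  rw [ext_iff_inner_right 𝕜]
  simp only [adjoint_inner_left]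

namespace Hsp

@[simp]
theorem negNZ_negNZ (n : NZ) : negNZ (negNZ n) = n := Subtype.ext (neg_neg n.1)

noncomputable def negPerm : Equiv.Perm NZ := Function.Involutive.toPerm negNZ negNZ_negNZ

theorem tsum_comp_negNZ (f : NZ → ℂ) : ∑' k, f (negNZ k) = ∑' k, f k := negPerm.tsum_eq f

theorem sign_negNZ (n : NZ) : ((negNZ n).1.sign : ℂ) = -n.1.sign := by
  simp [negNZ]

theorem sign_mul_sign (n : NZ) : (n.1.sign : ℂ) * n.1.sign = 1 := by
  rw [← Int.cast_mul, ← Int.sign_mul, Int.sign_eq_one_of_pos (mul_self_pos.2 n.2), Int.cast_one]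

theorem norm_sign (n : NZ) : ‖(n.1.sign : ℂ)‖ = 1 := by
  rw [norm_intCast, ← Int.cast_abs, Int.abs_sign_of_ne_zero n.2, Int.cast_one]

noncomputable def conjNeg : Hsp ≃ₗᵢ⋆[ℂ] Hsp :=
  (lp.compEquivₗᵢ ℂ negPerm).trans (starₗᵢ ℂ)

@[simp]
theorem conjNeg_apply (u : Hsp) (k : NZ) : conjNeg u k = conj (u (negNZ k)) := rfl

@[simp]
theorem conjNeg_conjNeg (u : Hsp) : conjNeg (conjNeg u) = u :=
  lp.ext (funext fun k => by simp)

theorem conjNeg_single (n : NZ) : conjNeg (lp.single 2 n 1) = lp.single 2 (negNZ n) 1 := by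
  classical
  refine lp.ext (funext fun k => ?_)
  simp [lp.single_apply, Pi.single_apply, (show Function.Involutive negNZ from negNZ_negNZ).eq_iff,
    apply_ite]

noncomputable def signMul : Hsp →L[ℂ] Hsp :=
  lp.mapCLM 2 (fun k : NZ => (k.1.sign : ℂ) • ContinuousLinearMap.id ℂ ℂ) zero_le_one
    (fun k => by rw [norm_smul, norm_sign, one_mul]; exact norm_id_le)

@[simp]
theorem signMul_apply (u : Hsp) (k : NZ) : signMul u k = k.1.sign * u k := by
  simp [signMul]

noncomputable def sgnConjNeg (u : Hsp) : Hsp := signMul (conjNeg u)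

theorem sgnConjNeg_apply (u : Hsp) (k : NZ) :
    sgnConjNeg u k = k.1.sign * conj (u (negNZ k)) := by
  simp [sgnConjNeg]

theorem sgnConjNeg_sgnConjNeg (u : Hsp) : sgnConjNeg (sgnConjNeg u) = -u := by
  refine lp.ext (funext fun k => ?_)
  simp [sgnConjNeg_apply, sign_negNZ, ← mul_assoc, sign_mul_sign]

theorem omegaB_eq_inner (u v : Hsp) : omegaB u v = ⟪sgnConjNeg u, v⟫_ℂ := by
  rw [omegaB, lp.inner_eq_tsum, ← tsum_comp_negNZ, ← tsum_neg]
  refine tsum_congr fun k => ?_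
  simp only [sgnConjNeg_apply, sign_negNZ, negNZ_negNZ, RCLike.inner_apply, map_mul, map_intCast,
    Complex.conj_conj]
  ring

theorem omegaB_conjNeg (u v : Hsp) : omegaB (conjNeg u) (conjNeg v) = -conj (omegaB u v) := by
  simp only [omegaB, map_neg, conj_tsum, neg_neg]
  rw [← tsum_comp_negNZ, ← tsum_neg]
  refine tsum_congr fun k => ?_
  simp [sign_negNZ]

theorem hasSum_apply (T : Hsp →L[ℂ] Hsp) (v : Hsp) (m : NZ) :
    HasSum (fun k => v k * ent T m k) (T v m) := by
  have hv : ∀ k, lp.single 2 k (v k) = v k • lp.single (E := fun _ : NZ => ℂ) 2 k 1 :=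
    fun k => by
    rw [← lp.single_smul, smul_eq_mul, mul_one]
  have := ((lp.evalCLM ℂ (fun _ : NZ => ℂ) 2 m).comp T).hasSum (lp.hasSum_single (by norm_num) v)
  simp only [comp_apply, hv, map_smul] at this
  exact this

theorem ent_comp (S T : Hsp →L[ℂ] Hsp) (m n : NZ) :
    ent (S.comp T) m n = ∑' k, ent S m k * ent T k n := by
  simp_rw [mul_comm (ent S m _)]
  exact (hasSum_apply S _ m).tsum_eq.symm

theorem ext_ent {S T : Hsp →L[ℂ] Hsp} (h : ∀ m n, ent S m n = ent T m n) : S = T :=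
  lp.ext_continuousLinearMap (by norm_num) fun n =>
    ContinuousLinearMap.ext_ring (lp.ext (funext fun m => h m n))

theorem ext_ent_iff {S T : Hsp →L[ℂ] Hsp} : S = T ↔ ∀ m n, ent S m n = ent T m n :=
  ⟨fun h _ _ => h ▸ rfl, ext_ent⟩

theorem ent_id (m n : NZ) : ent (ContinuousLinearMap.id ℂ Hsp) m n = if m = n then 1 else 0 := by
  classical
  simp [ent, lp.single_apply, Pi.single_apply]

theorem ent_adjoint (T : Hsp →L[ℂ] Hsp) (m n : NZ) : ent (adjoint T) m n = conj (ent T n m) := by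
  classical
  simpa [ent, lp.inner_single_left, lp.inner_single_right] using
    adjoint_inner_right T (lp.single 2 m 1) (lp.single 2 n 1)

theorem conjNeg_apply_conjNeg_single (T : Hsp →L[ℂ] Hsp) (m n : NZ) :
    conjNeg (T (conjNeg (lp.single 2 n 1))) m = conj (ent T (negNZ m) (negNZ n)) := by
  rw [conjNeg_single, conjNeg_apply, ent]

/-- The paper's `C ∘ A* ∘ C` with `C = i • conjNeg`: the scalars `i` and `conj i` cancel. -/
noncomputable def transpose (A : Hsp →L[ℂ] Hsp) : Hsp →L[ℂ] Hsp :=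
  (conjNeg.toContinuousLinearEquiv : Hsp →L⋆[ℂ] Hsp).comp
    ((adjoint A).comp (conjNeg.toContinuousLinearEquiv : Hsp →L⋆[ℂ] Hsp))

theorem transpose_apply (A : Hsp →L[ℂ] Hsp) (u : Hsp) :
    transpose A u = conjNeg (adjoint A (conjNeg u)) := rfl

theorem ent_transpose (A : Hsp →L[ℂ] Hsp) (m n : NZ) :
    ent (transpose A) m n = ent A (negNZ n) (negNZ m) := by
  rw [ent, transpose_apply, conjNeg_apply_conjNeg_single, ent_adjoint, conj_conj]

def PreservesOmega (T : Hsp →L[ℂ] Hsp) : Prop := ∀ u v, omegaB (T u) (T v) = omegaB u v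

theorem preservesOmega_iff (T : Hsp →L[ℂ] Hsp) :
    PreservesOmega T ↔ ∀ u, adjoint T (sgnConjNeg (T u)) = sgnConjNeg u := by
  simp only [PreservesOmega, omegaB_eq_inner]
  exact forall_inner_map_map_iff_adjoint _ _ T

theorem preservesOmega_transpose_iff (A : Hsp →L[ℂ] Hsp) :
    PreservesOmega (transpose A) ↔ PreservesOmega (adjoint A) := by
  refine conjNeg.surjective.forall.trans (forall_congr' fun u =>
    conjNeg.surjective.forall.trans (forall_congr' fun v => ?_))
  simp only [transpose_apply, conjNeg_conjNeg, omegaB_conjNeg, neg_inj,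
    (RingHom.injective (starRingEnd ℂ)).eq_iff]

theorem PreservesOmega.bijective_iff {A : Hsp →L[ℂ] Hsp} (hA : PreservesOmega A) :
    Function.Bijective A ↔ ∀ u, A (sgnConjNeg (adjoint A u)) = sgnConjNeg u :=
  bijective_iff_of_apply_apply_eq sgnConjNeg_sgnConjNeg ((preservesOmega_iff A).1 hA)

theorem preservesOmega_transpose_iff_apply (A : Hsp →L[ℂ] Hsp) :
    PreservesOmega (transpose A) ↔ ∀ u, A (sgnConjNeg (adjoint A u)) = sgnConjNeg u := by
  rw [preservesOmega_transpose_iff, preservesOmega_iff, adjoint_adjoint]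

theorem comp_smul_signMul_comp_transpose_eq_iff (A : Hsp →L[ℂ] Hsp) :
    A.comp ((I • signMul).comp (transpose A)) = I • signMul ↔
      ∀ u, A (sgnConjNeg (adjoint A u)) = sgnConjNeg u := by
  refine (ContinuousLinearMap.ext_iff.trans conjNeg.surjective.forall).trans
    (forall_congr' fun u => ?_)
  simp [transpose_apply, sgnConjNeg]

theorem ent_smul_signMul_comp (T : Hsp →L[ℂ] Hsp) (m n : NZ) :
    ent ((I • signMul).comp T) m n = I * m.1.sign * ent T m n := by
  simp [ent, mul_assoc]

theorem comp_smul_signMul_comp_transpose_eq_iff_ent (A : Hsp →L[ℂ] Hsp) :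
    A.comp ((I • signMul).comp (transpose A)) = I • signMul ↔
      ∀ m n : NZ, ∑' k : NZ, ((m.1 * k.1).sign : ℂ) * ent A m k * ent A (negNZ n) (negNZ k)
        = if m = n then 1 else 0 := by
  refine ext_ent_iff.trans (forall₂_congr fun m n => ?_)
  have hsign : I * m.1.sign ≠ 0 :=
    mul_ne_zero I_ne_zero (left_ne_zero_of_mul_eq_one (sign_mul_sign m))
  have hlhs : ent (A.comp ((I • signMul).comp (transpose A))) m n = I * m.1.sign *
      ∑' k : NZ, ((m.1 * k.1).sign : ℂ) * ent A m k * ent A (negNZ n) (negNZ k) := by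
    rw [ent_comp, ← tsum_mul_left]
    refine tsum_congr fun k => ?_
    rw [ent_smul_signMul_comp, ent_transpose, Int.sign_mul, Int.cast_mul]
    linear_combination (-I * k.1.sign * ent A m k * ent A (negNZ n) (negNZ k)) * sign_mul_sign m
  have hrhs : ent (I • signMul) m n = I * m.1.sign * if m = n then 1 else 0 := by
    rw [← comp_id (I • signMul), ent_smul_signMul_comp, ent_id]
  rw [hlhs, hrhs, mul_right_inj' hsign]

theorem ent_negNZ_negNZ_of_conjNeg_comm {A : Hsp →L[ℂ] Hsp}
    (hA : ∀ u, conjNeg (A (conjNeg u)) = A u) (m n : NZ) :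
    ent A (negNZ m) (negNZ n) = conj (ent A m n) := by
  rw [ent, ← hA, conjNeg_apply_conjNeg_single, negNZ_negNZ, negNZ_negNZ]

end Hsp

open Hsp

/-- Let `A` be a bounded operator on `𝓗` preserving the symplectic form `ω`, with `J` the
operator `(Ju)(n) = i·sgn(n)·u(n)`, `AT` the transpose of `A` (characterized by
`(A^T)_{m,n} = A_{−n,−m}`), and `C` the conjugation `(Cu)(n) = i·conj(u(−n))`.
Then: (1) `A` is bijective iff (2) `A ∘ J ∘ A^T = J` iff (3) `A^T` preserves `ω` iff
(4) `Σ_{k≠0} sgn(mk)·A_{m,k}·A_{−n,−k} = δ_{m,n}`; and if moreover `C∘A∘C = A`, these are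
also equivalent to (5) `Σ_{k≠0} sgn(mk)·A_{m,k}·conj(A_{n,k}) = δ_{m,n}`. -/
theorem invertible_tfae (A J AT : Hsp →L[ℂ] Hsp)
    (hJ : ∀ (u : Hsp) (n : NZ),
      (J u : ∀ _ : NZ, ℂ) n = Complex.I * (n.1.sign : ℂ) * (u : ∀ _ : NZ, ℂ) n)
    (hAT : ∀ m n : NZ, ent AT m n = ent A (negNZ n) (negNZ m))
    (C : Hsp → Hsp)
    (hC : ∀ (u : Hsp) (n : NZ),
      (C u : ∀ _ : NZ, ℂ) n = Complex.I * (starRingEnd ℂ) ((u : ∀ _ : NZ, ℂ) (negNZ n)))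
    (hpres : ∀ u v : Hsp, omegaB (A u) (A v) = omegaB u v) :
    (Function.Bijective A ↔ A.comp (J.comp AT) = J) ∧
    (Function.Bijective A ↔ ∀ u v : Hsp, omegaB (AT u) (AT v) = omegaB u v) ∧
    (Function.Bijective A ↔
      ∀ m n : NZ, ∑' k : NZ, ((m.1 * k.1).sign : ℂ) * ent A m k * ent A (negNZ n) (negNZ k)
        = if m = n then 1 else 0) ∧
    ((∀ u : Hsp, C (A (C u)) = A u) →
      (Function.Bijective A ↔
        ∀ m n : NZ, ∑' k : NZ, ((m.1 * k.1).sign : ℂ) * ent A m k * (starRingEnd ℂ) (ent A n k)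
          = if m = n then 1 else 0)) := by
  obtain rfl : J = I • signMul := ext fun u => lp.ext (funext fun n => by simp [hJ, mul_assoc])
  obtain rfl : AT = transpose A := ext_ent fun m n => by rw [hAT, ent_transpose]
  have hbij : Function.Bijective A ↔ ∀ u, A (sgnConjNeg (adjoint A u)) = sgnConjNeg u :=
    PreservesOmega.bijective_iff hpres
  have h2 := hbij.trans (comp_smul_signMul_comp_transpose_eq_iff A).symm
  have h4 := h2.trans (comp_smul_signMul_comp_transpose_eq_iff_ent A)
  refine ⟨h2, hbij.trans (preservesOmega_transpose_iff_apply A).symm, h4, fun hCA => ?_⟩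
  have hA : ∀ u, conjNeg (A (conjNeg u)) = A u := fun u => by
    have hC' : ∀ u, C u = I • conjNeg u := fun u => lp.ext (funext (hC u))
    simpa [hC', map_smulₛₗ, smul_smul] using hCA u
  simpa only [ent_negNZ_negNZ_of_conjNeg_comm hA] using h4
end

section
/- The set Sp(∞) of bounded linear operators A on 𝓗 such that (i) A is bijective, (ii) C∘A∘C = A, (iii) A preserves the form ω, and (iv) ‖A‖₂² := Σ_{m>0, n<0} |A_{m,n}|² < ∞, is a group under composition: the identity belongs to Sp(∞), and if A, B ∈ Sp(∞) then A∘B ∈ Sp(∞) and A⁻¹ ∈ Sp(∞). In particular, the upper-right block of A⁻¹ is again Hilbert–Schmidt. -/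
/-- Membership in `Sp(∞)` (relative to the conjugation `C`): `A` is bijective, commutes with
the conjugation (`C∘A∘C = A`), preserves the symplectic form `ω`, and its upper-right block
is Hilbert–Schmidt, i.e. `‖A‖₂² = Σ_{m>0, n<0} |A_{m,n}|² < ∞`. -/
def InSp (C : Hsp → Hsp) (A : Hsp →L[ℂ] Hsp) : Prop :=
  Function.Bijective A ∧ (∀ u : Hsp, C (A (C u)) = A u) ∧
    (∀ u v : Hsp, omegaB (A u) (A v) = omegaB u v) ∧
    Summable (fun p : NZ × NZ =>
      if 0 < p.1.1 ∧ p.2.1 < 0 then ‖ent A p.1 p.2‖ ^ 2 else (0:ℝ))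

open scoped ComplexConjugate InnerProductSpace lp ENNReal

theorem norm_add_sq_le_two_mul {E : Type*} [SeminormedAddGroup E] (x y : E) :
    ‖x + y‖ ^ 2 ≤ 2 * ‖x‖ ^ 2 + 2 * ‖y‖ ^ 2 := by
  nlinarith [pow_le_pow_left₀ (norm_nonneg _) (norm_add_le x y) 2, add_sq_le (a := ‖x‖) (b := ‖y‖)]

theorem Function.Involutive.commute_iff {α : Type*} {C f : α → α} (hC : Function.Involutive C) :
    Function.Commute C f ↔ ∀ u, C (f (C u)) = f u := by
  refine ⟨fun h u => by rw [h, hC], fun h u => ?_⟩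
  rw [← h u, hC]

namespace lp

variable {ι : Type*}

theorem norm_sq_eq_tsum_norm_sq {E : ι → Type*} [∀ i, NormedAddCommGroup (E i)] (u : lp E 2) :
    ‖u‖ ^ 2 = ∑' i, ‖u i‖ ^ 2 := by
  simpa [Real.rpow_two] using lp.norm_rpow_eq_tsum (p := 2) (by norm_num) u

theorem summable_norm_sq {E : ι → Type*} [∀ i, NormedAddCommGroup (E i)] (u : lp E 2) :
    Summable fun i => ‖u i‖ ^ 2 := by
  simpa [Real.rpow_two] using (lp.memℓp u).summable (p := 2) (by norm_num)

section indicator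

variable {E : Type*} [NormedAddCommGroup E] {p : ℝ≥0∞}

noncomputable def indicator (s : Set ι) (u : lp (fun _ : ι => E) p) : lp (fun _ : ι => E) p :=
  ⟨s.indicator u, (lp.memℓp u).mono' fun i => norm_indicator_le_norm_self u i⟩

@[simp]
theorem coe_indicator (s : Set ι) (u : lp (fun _ : ι => E) p) : ⇑(indicator s u) = s.indicator u :=
  rfl

theorem indicator_add_indicator_compl (s : Set ι) (u : lp (fun _ : ι => E) p) :
    indicator s u + indicator sᶜ u = u :=
  lp.ext (Set.indicator_self_add_compl s u)

theorem norm_sq_indicator (s : Set ι) (u : lp (fun _ : ι => E) 2) :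
    ‖indicator s u‖ ^ 2 = ∑' i, s.indicator (fun i => ‖u i‖ ^ 2) i := by
  rw [norm_sq_eq_tsum_norm_sq]
  congr 1 with i
  by_cases hi : i ∈ s <;> simp [hi]

end indicator

variable {𝕜 : Type*} [RCLike 𝕜]

theorem apply_eq_inner_single [DecidableEq ι] (u : ℓ²(ι, 𝕜)) (i : ι) :
    u i = ⟪lp.single 2 i (1 : 𝕜), u⟫_𝕜 := by
  simp [lp.inner_single_left]

theorem inner_indicator_left (s : Set ι) (u v : ℓ²(ι, 𝕜)) :
    ⟪indicator s u, v⟫_𝕜 = ⟪u, indicator s v⟫_𝕜 := by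
  simp only [lp.inner_eq_tsum, coe_indicator]
  congr 1 with i
  by_cases hi : i ∈ s <;> simp [hi]

end lp

section MatrixEntries

open ContinuousLinearMap

variable {ι 𝕜 : Type*} [RCLike 𝕜]

theorem summable_norm_sq_apply (T : ℓ²(ι, 𝕜) →L[𝕜] ℓ²(ι, 𝕜)) {v : ι → ℓ²(ι, 𝕜)}
    (hv : Summable fun j => ‖v j‖ ^ 2) : Summable fun p : ι × ι => ‖T (v p.1) p.2‖ ^ 2 := by
  have hrow (j : ι) : ∑' i, ‖T (v j) i‖ ^ 2 ≤ ‖T‖ ^ 2 * ‖v j‖ ^ 2 := by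
    rw [← lp.norm_sq_eq_tsum_norm_sq, ← mul_pow]
    exact pow_le_pow_left₀ (norm_nonneg _) (T.le_opNorm _) 2
  have hsum : Summable fun j => ∑' i, ‖T (v j) i‖ ^ 2 :=
    (hv.mul_left (‖T‖ ^ 2)).of_nonneg_of_le (fun _ => tsum_nonneg fun _ => sq_nonneg _) hrow
  refine (summable_prod_of_nonneg ?_).mpr ⟨fun j => lp.summable_norm_sq (T (v j)), hsum⟩
  exact fun _ => sq_nonneg _

variable [DecidableEq ι]

noncomputable def matrixEntry (A : ℓ²(ι, 𝕜) →L[𝕜] ℓ²(ι, 𝕜)) (i j : ι) : 𝕜 :=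
  A (lp.single 2 j 1) i

theorem adjoint_single_apply (A : ℓ²(ι, 𝕜) →L[𝕜] ℓ²(ι, 𝕜)) (i j : ι) :
    adjoint A (lp.single 2 i 1) j = conj (matrixEntry A i j) := by
  rw [lp.apply_eq_inner_single, adjoint_inner_right, lp.inner_single_right, matrixEntry,
    lp.apply_eq_inner_single, lp.inner_single_left]
  simp

noncomputable def upperRightNormSq (s : Set ι) (A : ℓ²(ι, 𝕜) →L[𝕜] ℓ²(ι, 𝕜)) : ι × ι → ℝ :=
  (s ×ˢ sᶜ).indicator fun p => ‖matrixEntry A p.1 p.2‖ ^ 2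

theorem upperRightNormSq_nonneg (s : Set ι) (A : ℓ²(ι, 𝕜) →L[𝕜] ℓ²(ι, 𝕜)) :
    0 ≤ upperRightNormSq s A :=
  Set.indicator_nonneg fun _ _ => by positivity

theorem upperRightNormSq_id (s : Set ι) :
    upperRightNormSq s (ContinuousLinearMap.id 𝕜 ℓ²(ι, 𝕜)) = 0 := by
  ext ⟨i, j⟩
  refine Set.indicator_apply_eq_zero.mpr fun hij => ?_
  have hne : i ≠ j := by rintro rfl; exact hij.2 hij.1
  simp [matrixEntry, hne]

theorem apply_indicator_apply_eq_conj (s : Set ι) (A B : ℓ²(ι, 𝕜) →L[𝕜] ℓ²(ι, 𝕜)) (i j : ι) :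
    A (lp.indicator s (B (lp.single 2 j 1))) i =
      conj (adjoint B (lp.indicator s (adjoint A (lp.single 2 i 1))) j) := by
  rw [lp.apply_eq_inner_single, ← adjoint_inner_left, ← lp.inner_indicator_left,
    ← adjoint_inner_left, lp.apply_eq_inner_single (adjoint B _), inner_conj_symm]

/-- `(AB)ᵢⱼ = Σₖ AᵢₖBₖⱼ` split at `k ∈ s`; the part over `k ∉ s` is read through the adjoints,
so that it is controlled by the row `i` of `A` rather than the column `j` of `B`. -/
theorem matrixEntry_comp_eq (s : Set ι) (A B : ℓ²(ι, 𝕜) →L[𝕜] ℓ²(ι, 𝕜)) (i j : ι) :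
    matrixEntry (A ∘L B) i j = A (lp.indicator s (B (lp.single 2 j 1))) i +
      conj (adjoint B (lp.indicator sᶜ (adjoint A (lp.single 2 i 1))) j) := by
  rw [← apply_indicator_apply_eq_conj, ← Pi.add_apply, ← lp.coeFn_add, ← map_add,
    lp.indicator_add_indicator_compl]
  rfl

theorem summable_upperRightNormSq_comp {s : Set ι} {A B : ℓ²(ι, 𝕜) →L[𝕜] ℓ²(ι, 𝕜)}
    (hA : Summable (upperRightNormSq s A)) (hB : Summable (upperRightNormSq s B)) :
    Summable (upperRightNormSq s (A ∘L B)) := by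
  classical
  let v : ι → ℓ²(ι, 𝕜) := sᶜ.indicator fun j => lp.indicator s (B (lp.single 2 j 1))
  let w : ι → ℓ²(ι, 𝕜) := s.indicator fun i => lp.indicator sᶜ (adjoint A (lp.single 2 i 1))
  have hv : Summable fun j => ‖v j‖ ^ 2 := by
    refine hB.prod_symm.prod.congr fun j => ?_
    by_cases hj : j ∈ s
    · simp [v, upperRightNormSq, hj]
    · simp only [v, Set.indicator_of_mem (Set.mem_compl hj), lp.norm_sq_indicator]
      congr 1 with i
      by_cases hi : i ∈ s <;> simp [upperRightNormSq, matrixEntry, hi, hj]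
  have hw : Summable fun i => ‖w i‖ ^ 2 := by
    refine hA.prod.congr fun i => ?_
    by_cases hi : i ∈ s
    · simp only [w, Set.indicator_of_mem hi, lp.norm_sq_indicator]
      congr 1 with j
      by_cases hj : j ∈ s <;> simp [upperRightNormSq, adjoint_single_apply, hi, hj]
    · simp [w, upperRightNormSq, hi]
  refine (((summable_norm_sq_apply A hv).prod_symm.mul_left 2).add
    ((summable_norm_sq_apply (adjoint B) hw).mul_left 2)).of_nonneg_of_le
    (upperRightNormSq_nonneg s _) fun ⟨i, j⟩ => ?_
  by_cases hij : (i, j) ∈ s ×ˢ sᶜ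
  · rw [upperRightNormSq, Set.indicator_of_mem hij, matrixEntry_comp_eq s]
    simpa [v, w, Set.indicator_of_mem hij.1, Set.indicator_of_mem hij.2]
      using norm_add_sq_le_two_mul (A (lp.indicator s (B (lp.single 2 j 1))) i)
        (conj (adjoint B (lp.indicator sᶜ (adjoint A (lp.single 2 i 1))) j))
  · rw [upperRightNormSq, Set.indicator_of_notMem hij]
    positivity

end MatrixEntries

theorem negNZ_involutive : Function.Involutive negNZ := fun n => Subtype.ext (neg_neg n.1)

theorem intCast_sign_negNZ (n : NZ) : ((negNZ n).1.sign : ℂ) = -n.1.sign := by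
  simp [negNZ, Int.sign_neg]

theorem norm_intCast_sign (n : NZ) : ‖(n.1.sign : ℂ)‖ = 1 := by
  rw [Complex.norm_intCast, ← Int.cast_abs, Int.abs_sign_of_ne_zero n.2, Int.cast_one]

theorem omegaB_single_right (u : Hsp) (n : NZ) :
    omegaB u (lp.single 2 n 1) = n.1.sign * u (negNZ n) := by
  rw [omegaB, tsum_eq_single (negNZ n) fun k hk => ?_]
  · rw [negNZ_involutive, lp.single_apply_self, intCast_sign_negNZ]
    ring
  · rw [lp.single_apply_ne _ _ _ fun h => hk (by rw [← h, negNZ_involutive]), mul_zero]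

theorem omegaB_single_left (n : NZ) (v : Hsp) :
    omegaB (lp.single 2 n 1) v = -(n.1.sign * v (negNZ n)) := by
  rw [omegaB, tsum_eq_single n fun k hk => ?_]
  · rw [lp.single_apply_self, mul_one]
  · rw [lp.single_apply_ne _ _ _ hk, mul_zero, zero_mul]

/-- A right inverse of an `ω`-preserving operator is its `ω`-transpose. -/
theorem sign_mul_ent_of_rightInverse {A B : Hsp →L[ℂ] Hsp}
    (hA : ∀ u v, omegaB (A u) (A v) = omegaB u v) (hAB : ∀ u, A (B u) = u) (m n : NZ) :
    m.1.sign * ent B m n = n.1.sign * ent A (negNZ n) (negNZ m) := by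
  have h := hA (lp.single 2 (negNZ m) 1) (B (lp.single 2 n 1))
  rw [hAB, omegaB_single_right, omegaB_single_left, negNZ_involutive, intCast_sign_negNZ] at h
  rw [ent, ent, h]
  ring

def posNZ : Set NZ := {n | 0 < n.1}

theorem mem_posNZ_prod_compl_iff {m n : NZ} :
    (m, n) ∈ posNZ ×ˢ posNZᶜ ↔ 0 < m.1 ∧ n.1 < 0 := by
  have := n.2
  simp only [posNZ, Set.mem_prod, Set.mem_compl_iff, Set.mem_ofPred_eq]
  omega

theorem ite_eq_upperRightNormSq_posNZ (A : Hsp →L[ℂ] Hsp) :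
    (fun p : NZ × NZ => if 0 < p.1.1 ∧ p.2.1 < 0 then ‖ent A p.1 p.2‖ ^ 2 else (0:ℝ)) =
      upperRightNormSq posNZ A := by
  ext ⟨m, n⟩
  by_cases h : 0 < m.1 ∧ n.1 < 0
  · rw [upperRightNormSq, Set.indicator_of_mem (mem_posNZ_prod_compl_iff.mpr h), if_pos h]
    rfl
  · rw [upperRightNormSq, Set.indicator_of_notMem (mt mem_posNZ_prod_compl_iff.mp h), if_neg h]

theorem summable_upperRightNormSq_of_rightInverse {A B : Hsp →L[ℂ] Hsp}
    (hA : ∀ u v, omegaB (A u) (A v) = omegaB u v) (hAB : ∀ u, A (B u) = u)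
    (hHS : Summable (upperRightNormSq posNZ A)) :
    Summable (upperRightNormSq posNZ B) := by
  let σ : NZ × NZ → NZ × NZ := fun p => (negNZ p.2, negNZ p.1)
  have hσ : Function.Involutive σ := fun p => Prod.ext (negNZ_involutive _) (negNZ_involutive _)
  refine (hHS.comp_injective hσ.injective).congr fun ⟨m, n⟩ => ?_
  have hmem : σ (m, n) ∈ posNZ ×ˢ posNZᶜ ↔ (m, n) ∈ posNZ ×ˢ posNZᶜ := by
    have := m.2
    simp only [σ, mem_posNZ_prod_compl_iff, negNZ]
    omega
  have hnorm := congrArg norm (sign_mul_ent_of_rightInverse hA hAB m n)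
  rw [norm_mul, norm_mul, norm_intCast_sign, norm_intCast_sign, one_mul, one_mul] at hnorm
  by_cases h : (m, n) ∈ posNZ ×ˢ posNZᶜ
  · rw [Function.comp_apply, upperRightNormSq, upperRightNormSq,
      Set.indicator_of_mem (hmem.mpr h), Set.indicator_of_mem h]
    exact congrArg (· ^ 2) hnorm.symm
  · rw [Function.comp_apply, upperRightNormSq, upperRightNormSq,
      Set.indicator_of_notMem (mt hmem.mp h), Set.indicator_of_notMem h]

section SpInfinity

variable {C : Hsp → Hsp}

theorem involutive_of_apply_eq_I_mul_conj
    (hC : ∀ (u : Hsp) (n : NZ), C u n = Complex.I * conj (u (negNZ n))) :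
    Function.Involutive C := fun u => lp.ext <| funext fun n => by
  rw [hC, hC, negNZ_involutive, map_mul, Complex.conj_I, Complex.conj_conj, ← mul_assoc,
    mul_neg, Complex.I_mul_I, neg_neg, one_mul]

theorem inSp_id (hC : Function.Involutive C) : InSp C (ContinuousLinearMap.id ℂ Hsp) :=
  ⟨Function.bijective_id, hC, fun _ _ => rfl, by
    rw [ite_eq_upperRightNormSq_posNZ, upperRightNormSq_id]; exact summable_zero⟩

theorem InSp.comp (hC : Function.Involutive C) {A B : Hsp →L[ℂ] Hsp} (hA : InSp C A)
    (hB : InSp C B) : InSp C (A ∘L B) := by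
  obtain ⟨hA_bij, hAC, hAω, hA_HS⟩ := hA
  obtain ⟨hB_bij, hBC, hBω, hB_HS⟩ := hB
  rw [ite_eq_upperRightNormSq_posNZ] at hA_HS hB_HS
  refine ⟨hA_bij.comp hB_bij, hC.commute_iff.mp ?_, fun u v => (hAω _ _).trans (hBω u v), ?_⟩
  · exact (hC.commute_iff.mpr hAC).comp_right (hC.commute_iff.mpr hBC)
  · rw [ite_eq_upperRightNormSq_posNZ]
    exact summable_upperRightNormSq_comp hA_HS hB_HS

theorem InSp.of_inverse (hC : Function.Involutive C) {A B : Hsp →L[ℂ] Hsp} (hA : InSp C A)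
    (hBA : ∀ u, B (A u) = u) (hAB : ∀ u, A (B u) = u) : InSp C B := by
  obtain ⟨-, hAC, hAω, hA_HS⟩ := hA
  rw [ite_eq_upperRightNormSq_posNZ] at hA_HS
  refine ⟨Function.bijective_iff_has_inverse.mpr ⟨A, hAB, hBA⟩, hC.commute_iff.mp ?_,
    fun u v => by rw [← hAω, hAB, hAB], ?_⟩
  · exact Function.Semiconj.inverses_right (hC.commute_iff.mpr hAC) hAB hBA
  · rw [ite_eq_upperRightNormSq_posNZ]
    exact summable_upperRightNormSq_of_rightInverse hAω hAB hA_HS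

end SpInfinity

/-- `Sp(∞)` is a group under composition: the identity lies in `Sp(∞)`, `Sp(∞)` is closed
under composition, and any (continuous) two-sided inverse of an element of `Sp(∞)` again
lies in `Sp(∞)`; in particular the upper-right block of the inverse is Hilbert–Schmidt. -/
theorem sp_infty_group (C : Hsp → Hsp)
    (hC : ∀ (u : Hsp) (n : NZ),
      (C u : ∀ _ : NZ, ℂ) n = Complex.I * (starRingEnd ℂ) ((u : ∀ _ : NZ, ℂ) (negNZ n))) :
    InSp C (ContinuousLinearMap.id ℂ Hsp) ∧
    (∀ A B : Hsp →L[ℂ] Hsp, InSp C A → InSp C B → InSp C (A.comp B)) ∧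
    (∀ A B : Hsp →L[ℂ] Hsp, InSp C A →
      (∀ u : Hsp, B (A u) = u) → (∀ u : Hsp, A (B u) = u) → InSp C B) := by
  have hCC := involutive_of_apply_eq_I_mul_conj hC
  exact ⟨inSp_id hCC, fun _ _ => InSp.comp hCC, fun _ _ hA => InSp.of_inverse hCC hA⟩
end

section
/- There do not exist a lift φ of an orientation-preserving C^∞ diffeomorphism of S¹ (φ : ℝ → ℝ C^∞, φ' > 0, φ(θ+2π) = φ(θ)+2π) and a constant c ∈ ℂ such that e^{iφ(θ)} = √2·e^{iθ} − e^{−iθ} + c for all θ ∈ ℝ. (Consequently the operator A ∈ Sp(∞) with A ẽ₁ = √2 ẽ₁ − i ẽ₋₁, A ẽ₋₁ = i ẽ₁ + √2 ẽ₋₁ and A ẽ_n = ẽ_n for |n| ≥ 2 is not of the form Φ(ψ) for any diffeomorphism ψ, so Φ : Diff(S¹) → Sp(∞) is not surjective.) -/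
/-!
If `e^{iφ(θ)} = g(θ) + c` with `g(θ) = √2·e^{iθ} − e^{−iθ}`, then every point `g(θ) + c` lies on
the unit circle. Since `g(θ + π) = −g(θ)`, the two points at `θ = π/2` and `θ = 3π/2` are
`2‖g(π/2)‖ = 2(√2 + 1) > 2` apart, more than the diameter of that circle.
-/

open Complex

noncomputable def ellipseCurve (θ : ℝ) : ℂ :=
  Real.sqrt 2 * exp (I * θ) - exp (-I * θ)

theorem ellipseCurve_add_pi (θ : ℝ) : ellipseCurve (θ + Real.pi) = -ellipseCurve θ := by
  simp only [ellipseCurve, ofReal_add, mul_add, neg_mul, exp_add, exp_neg,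
    mul_comm I (Real.pi : ℂ), exp_pi_mul_I]
  ring

theorem ellipseCurve_pi_div_two : ellipseCurve (Real.pi / 2) = (Real.sqrt 2 + 1 : ℝ) * I := by
  have exp_I_pi_div_two : exp (I * (Real.pi / 2 : ℝ)) = I := by
    rw [mul_comm, ofReal_div, ofReal_ofNat, exp_pi_div_two_mul_I]
  rw [ellipseCurve, neg_mul, exp_neg, exp_I_pi_div_two, inv_I]
  push_cast
  ring

theorem norm_ellipseCurve_pi_div_two : ‖ellipseCurve (Real.pi / 2)‖ = Real.sqrt 2 + 1 := by
  rw [ellipseCurve_pi_div_two, norm_mul, norm_I, mul_one, norm_real,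
    Real.norm_of_nonneg (by positivity)]

/-- The symplectic representation `Φ : Diff(S¹) → Sp(∞)` is not surjective: there is no
orientation-preserving `C^∞` diffeomorphism of `S¹` (given by a lift `φ`) and constant
`c ∈ ℂ` with `e^{iφ(θ)} = √2·e^{iθ} − e^{−iθ} + c` for all `θ`. (The image of
`θ ↦ √2·e^{iθ} − e^{−iθ}` is an ellipse, not a unit circle, so the explicit element
`A ∈ Sp(∞)` with `A ẽ₁ = √2 ẽ₁ − i ẽ₋₁` is not `Φ(ψ)` for any diffeomorphism `ψ`.) -/
theorem not_surjective :
    ¬ ∃ (φ : ℝ → ℝ) (c : ℂ), ContDiff ℝ (⊤ : ℕ∞) φ ∧ (∀ θ, 0 < deriv φ θ) ∧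
      (∀ θ, φ (θ + 2 * Real.pi) = φ θ + 2 * Real.pi) ∧
      ∀ θ : ℝ, Complex.exp (Complex.I * (φ θ : ℝ)) =
        (Real.sqrt 2 : ℝ) * Complex.exp (Complex.I * (θ : ℝ))
          - Complex.exp (-(Complex.I) * (θ : ℝ)) + c := by
  rintro ⟨φ, c, -, -, -, h⟩
  have on_unit_circle (θ : ℝ) : ‖ellipseCurve θ + c‖ = 1 := by
    rw [ellipseCurve, ← h θ, mul_comm, norm_exp_ofReal_mul_I]
  have antipodal_dist_le_two : 2 * ‖ellipseCurve (Real.pi / 2)‖ ≤ 2 :=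
    calc 2 * ‖ellipseCurve (Real.pi / 2)‖
        = ‖(ellipseCurve (Real.pi / 2) + c) - (ellipseCurve (Real.pi / 2 + Real.pi) + c)‖ := by
          rw [ellipseCurve_add_pi, add_sub_add_right_eq_sub, sub_neg_eq_add, ← two_mul,
            norm_mul, Complex.norm_two]
      _ ≤ ‖ellipseCurve (Real.pi / 2) + c‖ + ‖ellipseCurve (Real.pi / 2 + Real.pi) + c‖ :=
          norm_sub_le _ _
      _ = 2 := by rw [on_unit_circle, on_unit_circle]; norm_num
  rw [norm_ellipseCurve_pi_div_two] at antipodal_dist_le_two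
  linarith [Real.sqrt_pos.2 (two_pos : (0 : ℝ) < 2)]
end
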